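/- Under the shared-Bernoulli coupling of Greedy and OPT with geometric usage durations, let H_t = {(P_{is})_{i∈[N]}, N_s, A_s, A*_s}_{s ≤ t} denote the history through time t, and let H_t be the set of histories h through time t−1 in which the event F_{i,t-1} occurs and F*_{i,t-1} does not (where F_{it} = {i ∉ I_t} ∪ {A_t = i} and F*_{it} = {i ∉ I*_t} ∪ {A*_t = i}). Then for any i with p_i > 0, any t, and any history h ∈ H_t: Pr(A*_t = i, A_t < i, H_{t-1} = h) = ((1 - p_i)/p_i) · Pr(A*_t = i, A_t = i, H_{t-1} = h). -/

import Mathlib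

open Finset

/-- An online policy for the online matching problem with reusable resources,
with `N` resources, `T` requests, and neighborhoods `Nbr`.  Upon arrival of
request `t`, the policy observes the time `t`, the set of currently available
resources, and the history of previously observed availability sets, and
matches the request to at most one available resource adjacent to `t`
(`none` means no match). -/
structure Policy (N T : ℕ) (Nbr : Fin T → Finset (Fin N)) where
  act : Fin T → Finset (Fin N) → List (Finset (Fin N)) → Option (Fin N)
  feasible : ∀ t I hist i, act t I hist = some i → i ∈ I ∩ Nbr t

/-- Sample space of the shared-Bernoulli coupling for geometric usage
durations: `ω i t` is the return flag `P_{it} ~ Bernoulli (p i)`.  A resource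
`i` that is unavailable returns at the start of time `t` iff `ω i t = true`;
this makes the usage duration of every match of `i` distributed as
`Geometric (p i)` on `{1, 2, ...}`. -/
abbrev Flags (N T : ℕ) := Fin N → Fin T → Bool

/-- One step of the dynamics at time `t`.  The state is the pair consisting of
the set of resources unavailable at the end of the previous step and the
history of observed availability sets. -/
def step {N T : ℕ} {Nbr : Fin T → Finset (Fin N)} (π : Policy N T Nbr)
    (ω : Flags N T) (s : Finset (Fin N) × List (Finset (Fin N))) (t : Fin T) :
    Finset (Fin N) × List (Finset (Fin N)) :=
  let busy := s.1.filter fun i => ω i t = false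
  let I : Finset (Fin N) := Finset.univ \ busy
  match π.act t I s.2 with
  | none => (busy, I :: s.2)
  | some i => (insert i busy, I :: s.2)

/-- The state just before step `n` (resources unavailable at the end of step
`n-1`, together with the observed history). -/
def stateUpTo {N T : ℕ} {Nbr : Fin T → Finset (Fin N)} (π : Policy N T Nbr)
    (ω : Flags N T) (n : ℕ) : Finset (Fin N) × List (Finset (Fin N)) :=
  ((List.finRange T).take n).foldl (step π ω) (∅, [])

/-- `I_t`: the set of resources available at time `t` under policy `π`. -/
def avail {N T : ℕ} {Nbr : Fin T → Finset (Fin N)} (π : Policy N T Nbr)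
    (ω : Flags N T) (t : Fin T) : Finset (Fin N) :=
  Finset.univ \ ((stateUpTo π ω t.val).1.filter fun i => ω i t = false)

/-- `A_t`: the resource matched at time `t` under policy `π` (`none` = no match). -/
def act {N T : ℕ} {Nbr : Fin T → Finset (Fin N)} (π : Policy N T Nbr)
    (ω : Flags N T) (t : Fin T) : Option (Fin N) :=
  π.act t (avail π ω t) (stateUpTo π ω t.val).2

/-- The total reward collected by policy `π` on the sample path `ω`. -/
def reward {N T : ℕ} {Nbr : Fin T → Finset (Fin N)} (r : Fin N → ℝ)
    (π : Policy N T Nbr) (ω : Flags N T) : ℝ :=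
  ∑ t : Fin T, (act π ω t).elim 0 r

/-- Probability of the flag configuration `ω` when `P_{it} ~ Bernoulli (p i)`
independently. -/
noncomputable def weight {N T : ℕ} (p : Fin N → ℝ) (ω : Flags N T) : ℝ :=
  ∏ i : Fin N, ∏ t : Fin T, if ω i t then p i else 1 - p i

/-- Expectation over the i.i.d. Bernoulli return flags. -/
noncomputable def expect {N T : ℕ} (p : Fin N → ℝ) (f : Flags N T → ℝ) : ℝ :=
  ∑ ω : Flags N T, weight p ω * f ω

/-- The greedy policy: match the available neighboring resource of largest
index (equivalently, of highest reward, since rewards are sorted). -/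
def greedy (N T : ℕ) (Nbr : Fin T → Finset (Fin N)) : Policy N T Nbr where
  act := fun t I _ => if h : (I ∩ Nbr t).Nonempty then some ((I ∩ Nbr t).max' h) else none
  feasible := by
    intro t I hist i hi
    by_cases h : (I ∩ Nbr t).Nonempty
    · rw [dif_pos h, Option.some.injEq] at hi
      exact hi ▸ Finset.max'_mem _ h
    · rw [dif_neg h] at hi
      exact absurd hi (by simp)

/-- `Greedy(I)`: the expected total reward of the greedy policy. -/
noncomputable def greedyVal (N T : ℕ) (Nbr : Fin T → Finset (Fin N))
    (r : Fin N → ℝ) (p : Fin N → ℝ) : ℝ :=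
  expect p (reward r (greedy N T Nbr))

/-- `OPT(I)`: the optimal expected total reward over all (clairvoyant)
policies; such a policy knows the whole instance, including the request
sequence, but observes returns only as they occur. -/
noncomputable def optVal (N T : ℕ) (Nbr : Fin T → Finset (Fin N))
    (r : Fin N → ℝ) (p : Fin N → ℝ) : ℝ :=
  ⨆ π : Policy N T Nbr, expect p (reward r π)

/-- The set of resources unavailable under `π` at the end of step `n - 1`
(equivalently, just before the returns at the start of step `n`).  For
`n = t + 1` membership `i ∈ busyEnd π ω (t+1)` is exactly the event
`F_{it} = {i ∉ I_t} ∪ {A_t = i}` of the paper: resource `i` was either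
unavailable at time `t` or matched at time `t`; for `n = 0` it is the empty
(always false) event, matching the convention that all resources start
available. -/
def busyEnd {N T : ℕ} {Nbr : Fin T → Finset (Fin N)} (π : Policy N T Nbr)
    (ω : Flags N T) (n : ℕ) : Finset (Fin N) :=
  (stateUpTo π ω n).1

/-- The event `A_t < i`: the policy matched a resource of strictly smaller
index than `i`, or made no match. -/
def matchedBelow {N T : ℕ} {Nbr : Fin T → Finset (Fin N)} (π : Policy N T Nbr)
    (ω : Flags N T) (t : Fin T) (i : Fin N) : Prop :=
  (act π ω t).elim True (fun j => j < i)

open scoped Classical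

/-- The event `H_{t-1} = h`: the sample path `ω` agrees with the reference
sample path `h` on all return flags `P_{is}` with `s ≤ t - 1`.  Since the
neighborhoods `N_s` are deterministic and the actions `A_s`, `A*_s` for
`s ≤ t - 1` are deterministic functions of these flags, this is exactly the
event that the history `{(P_{is})_i, N_s, A_s, A*_s}_{s ≤ t-1}` of both
coupled runs equals the one generated by `h`. -/
def prefixAgree {N T : ℕ} (ω h : Flags N T) (t : Fin T) : Prop :=
  ∀ (i : Fin N) (s : Fin T), s.val < t.val → ω i s = h i s

/-!
Flipping the single return flag `P_{it}` is an involution of the sample space that multiplies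
the probability of a path with `P_{it} = 0` by `p_i / (1 - p_i)`. It changes nothing before
time `t`, so it preserves the event `H_{t-1} = h`. On `𝓗_t` the resource `i` is available to
OPT at time `t` whatever `P_{it}` is, so the flip does not change `A*_t`; for Greedy, `i` is
available at time `t` exactly when `P_{it} = 1`. If `A*_t = i` then `i ∈ N_t`, and Greedy with
`i` unavailable matches below `i` iff, once `i` is made available, it matches `i`. Hence the
flip maps `{A*_t = i, A_t < i, H_{t-1} = h}` bijectively onto `{A*_t = i, A_t = i, H_{t-1} = h}`.
-/

section Flip

variable {N T : ℕ}

def flipFlag (i : Fin N) (t : Fin T) (ω : Flags N T) : Flags N T :=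
  fun j s => if (j, s) = (i, t) then !ω j s else ω j s

lemma flipFlag_involutive (i : Fin N) (t : Fin T) : Function.Involutive (flipFlag i t) := by
  intro ω
  funext j s
  by_cases hjs : (j, s) = (i, t) <;> simp [flipFlag, hjs]

lemma flipFlag_apply_self (i : Fin N) (t : Fin T) (ω : Flags N T) :
    flipFlag i t ω i t = !ω i t := by
  simp [flipFlag]

lemma flipFlag_apply_of_ne {i j : Fin N} {t s : Fin T} (ω : Flags N T) (h : (j, s) ≠ (i, t)) :
    flipFlag i t ω j s = ω j s := by
  simp [flipFlag, h]

lemma flipFlag_apply_of_lt {i j : Fin N} {t s : Fin T} (ω : Flags N T) (hs : s.val < t.val) :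
    flipFlag i t ω j s = ω j s :=
  flipFlag_apply_of_ne ω fun h => hs.ne (congrArg (·.2.val) h)

lemma prefixAgree_flipFlag {i : Fin N} {t : Fin T} {ω h : Flags N T} (hP : prefixAgree ω h t) :
    prefixAgree (flipFlag i t ω) h t :=
  fun j s hs => (flipFlag_apply_of_lt ω hs).trans (hP j s hs)

lemma mul_weight_flipFlag (p : Fin N → ℝ) {i : Fin N} {t : Fin T} {ω : Flags N T}
    (hω : ω i t = false) :
    (1 - p i) * weight p (flipFlag i t ω) = p i * weight p ω := by
  have hrest : ∀ x ∈ ({(i, t)}ᶜ : Finset (Fin N × Fin T)),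
      (if flipFlag i t ω x.1 x.2 then p x.1 else 1 - p x.1)
        = if ω x.1 x.2 then p x.1 else 1 - p x.1 := fun x hx => by
    rw [flipFlag_apply_of_ne ω (by simpa using hx)]
  simp only [weight, ← Fintype.prod_prod_type' fun j s => if _ then p j else 1 - p j,
    Fintype.prod_eq_mul_prod_compl (i, t), Finset.prod_congr rfl hrest, flipFlag_apply_self, hω]
  simp only [Bool.not_false, if_true, Bool.false_eq_true, if_false]
  ring

lemma expect_indicator_eq_odds_mul {p : Fin N → ℝ} {i : Fin N} {t : Fin T} (hpi : p i ≠ 0)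
    (L R : Flags N T → Prop) [DecidablePred L] [DecidablePred R]
    (hLR : ∀ ω, L ω → ω i t = false ∧ R (flipFlag i t ω))
    (hRL : ∀ ω, R ω → L (flipFlag i t ω)) :
    expect p (fun ω => if L ω then 1 else 0)
      = (1 - p i) / p i * expect p (fun ω => if R ω then 1 else 0) := by
  have hterm : ∀ ω, weight p ω * (if L ω then 1 else 0)
      = (1 - p i) / p i * (weight p (flipFlag i t ω) * if R (flipFlag i t ω) then 1 else 0) := by
    intro ω
    by_cases hL : L ω
    · obtain ⟨hω, hR⟩ := hLR ω hL
      rw [if_pos hL, if_pos hR, mul_one, mul_one, div_mul_eq_mul_div, mul_weight_flipFlag p hω,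
        mul_div_cancel_left₀ _ hpi]
    · have hR : ¬ R (flipFlag i t ω) := fun hR => hL (flipFlag_involutive i t ω ▸ hRL _ hR)
      rw [if_neg hL, if_neg hR, mul_zero, mul_zero, mul_zero]
  rw [_root_.expect, Finset.sum_congr rfl fun ω _ => hterm ω, ← Finset.mul_sum, _root_.expect]
  exact congrArg _ (Fintype.sum_bijective _ (flipFlag_involutive i t).bijective _ _ fun _ => rfl)

end Flip

section Dynamics

variable {N T : ℕ} {Nbr : Fin T → Finset (Fin N)} (π : Policy N T Nbr)

lemma stateUpTo_congr {ω ω' : Flags N T} {n : ℕ}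
    (hω : ∀ j (s : Fin T), s.val < n → ω j s = ω' j s) :
    stateUpTo π ω n = stateUpTo π ω' n := by
  refine List.foldl_ext _ _ _ fun st s hs => ?_
  have hsn : s.val < n := by
    obtain ⟨k, hk, rfl⟩ := List.mem_take_iff_getElem.mp hs
    simp only [List.getElem_finRange, Fin.cast_mk]
    omega
  have hωs : ∀ j, ω j s = ω' j s := fun j => hω j s hsn
  simp only [step, hωs]

lemma busyEnd_eq_of_prefixAgree {ω h : Flags N T} {t : Fin T} (hP : prefixAgree ω h t) :
    busyEnd π ω t = busyEnd π h t :=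
  congrArg Prod.fst (stateUpTo_congr π hP)

lemma stateUpTo_flipFlag (i : Fin N) (t : Fin T) (ω : Flags N T) :
    stateUpTo π (flipFlag i t ω) t = stateUpTo π ω t :=
  stateUpTo_congr π fun _ _ hs => flipFlag_apply_of_lt ω hs

lemma mem_avail_iff {ω : Flags N T} {t : Fin T} {j : Fin N} :
    j ∈ avail π ω t ↔ j ∉ busyEnd π ω t ∨ ω j t = true := by
  simp [avail, busyEnd, imp_iff_not_or]

lemma mem_avail_flipFlag_iff {i j : Fin N} {t : Fin T} {ω : Flags N T} :
    j ∈ avail π (flipFlag i t ω) t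
      ↔ j ∉ busyEnd π ω t ∨ (if j = i then !ω i t else ω j t) = true := by
  rw [mem_avail_iff, busyEnd, stateUpTo_flipFlag, ← busyEnd]
  split_ifs with hj
  · rw [hj, flipFlag_apply_self]
  · rw [flipFlag_apply_of_ne ω (by simp [hj])]

lemma act_flipFlag_of_not_mem_busyEnd {i : Fin N} {t : Fin T} {ω : Flags N T}
    (hi : i ∉ busyEnd π ω t) :
    act π (flipFlag i t ω) t = act π ω t := by
  have havail : avail π (flipFlag i t ω) t = avail π ω t := by
    ext j
    rw [mem_avail_flipFlag_iff, mem_avail_iff]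
    split_ifs with hj
    · subst hj; simp [hi]
    · rfl
  rw [act, act, havail, stateUpTo_flipFlag]

lemma avail_flipFlag_of_false {i : Fin N} {t : Fin T} {ω : Flags N T} (hω : ω i t = false) :
    avail π (flipFlag i t ω) t = insert i (avail π ω t) := by
  ext j
  rw [mem_avail_flipFlag_iff, Finset.mem_insert, mem_avail_iff]
  split_ifs with hj
  · simp [hj, hω]
  · simp [hj]

lemma avail_flipFlag_of_true {i : Fin N} {t : Fin T} {ω : Flags N T}
    (hi : i ∈ busyEnd π ω t) (hω : ω i t = true) :
    avail π (flipFlag i t ω) t = (avail π ω t).erase i := by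
  ext j
  rw [mem_avail_flipFlag_iff, Finset.mem_erase, mem_avail_iff]
  split_ifs with hj
  · simp [hj, hω, hi]
  · simp [hj]

end Dynamics

section Greedy

variable {N T : ℕ} {Nbr : Fin T → Finset (Fin N)} {ω : Flags N T} {t : Fin T} {i : Fin N}

lemma act_greedy (ω : Flags N T) (t : Fin T) :
    act (greedy N T Nbr) ω t =
      if hne : (avail (greedy N T Nbr) ω t ∩ Nbr t).Nonempty
      then some ((avail (greedy N T Nbr) ω t ∩ Nbr t).max' hne) else none :=
  rfl

lemma act_greedy_eq_some_iff :
    act (greedy N T Nbr) ω t = some i ↔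
      i ∈ avail (greedy N T Nbr) ω t ∩ Nbr t ∧ ∀ j ∈ avail (greedy N T Nbr) ω t ∩ Nbr t, j ≤ i := by
  rw [act_greedy]
  split_ifs with hne
  · rw [Option.some_inj]
    constructor
    · rintro rfl
      exact ⟨Finset.max'_mem _ hne, fun j hj => Finset.le_max' _ j hj⟩
    · rintro ⟨hi, hmax⟩
      exact le_antisymm (Finset.max'_le _ hne _ hmax) (Finset.le_max' _ i hi)
  · simp only [false_iff, not_and]
    exact fun hi => absurd ⟨i, hi⟩ hne

lemma matchedBelow_greedy_iff :
    matchedBelow (greedy N T Nbr) ω t i ↔ ∀ j ∈ avail (greedy N T Nbr) ω t ∩ Nbr t, j < i := by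
  rw [matchedBelow, act_greedy]
  split_ifs with hne
  · exact Finset.max'_lt_iff _ hne
  · simp only [Option.elim_none, true_iff]
    exact fun j hj => absurd ⟨j, hj⟩ hne

lemma flag_eq_false_of_matchedBelow_greedy (hiN : i ∈ Nbr t)
    (hM : matchedBelow (greedy N T Nbr) ω t i) : ω i t = false := by
  by_contra hω
  have hiS : i ∈ avail (greedy N T Nbr) ω t ∩ Nbr t :=
    Finset.mem_inter.mpr ⟨(mem_avail_iff _).mpr (Or.inr (by simpa using hω)), hiN⟩
  exact lt_irrefl i (matchedBelow_greedy_iff.mp hM i hiS)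

lemma act_greedy_flipFlag_of_matchedBelow (hiN : i ∈ Nbr t)
    (hM : matchedBelow (greedy N T Nbr) ω t i) :
    act (greedy N T Nbr) (flipFlag i t ω) t = some i := by
  have hω := flag_eq_false_of_matchedBelow_greedy hiN hM
  rw [matchedBelow_greedy_iff] at hM
  rw [act_greedy_eq_some_iff, avail_flipFlag_of_false _ hω, Finset.insert_inter_of_mem hiN,
    Finset.forall_mem_insert]
  exact ⟨Finset.mem_insert_self _ _, le_rfl, fun j hj => (hM j hj).le⟩

lemma matchedBelow_greedy_flipFlag_of_act_eq (hi : i ∈ busyEnd (greedy N T Nbr) ω t)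
    (hA : act (greedy N T Nbr) ω t = some i) :
    matchedBelow (greedy N T Nbr) (flipFlag i t ω) t i := by
  obtain ⟨hiS, hmax⟩ := act_greedy_eq_some_iff.mp hA
  have hω : ω i t = true :=
    ((mem_avail_iff _).mp (Finset.mem_inter.mp hiS).1).resolve_left (not_not.mpr hi)
  rw [matchedBelow_greedy_iff, avail_flipFlag_of_true _ hi hω, Finset.erase_inter]
  intro j hj
  obtain ⟨hji, hjS⟩ := Finset.mem_erase.mp hj
  exact lt_of_le_of_ne (hmax j hjS) hji

end Greedy

theorem conditional_history_identity_general
    (N T : ℕ)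
    (Nbr : Fin T → Finset (Fin N))
    (pv : Fin N → ℝ)
    (π : Policy N T Nbr) (i : Fin N) (hpi : 0 < pv i) (t : Fin T)
    (h : Flags N T)
    (hhist : i ∈ busyEnd (greedy N T Nbr) h t.val ∧ i ∉ busyEnd π h t.val) :
    expect pv (fun ω =>
        if act π ω t = some i ∧ matchedBelow (greedy N T Nbr) ω t i ∧
            prefixAgree ω h t
        then 1 else 0)
      = ((1 - pv i) / pv i) *
        expect pv (fun ω =>
          if act π ω t = some i ∧ act (greedy N T Nbr) ω t = some i ∧
              prefixAgree ω h t
          then 1 else 0) := by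
  obtain ⟨hGh, hπh⟩ := hhist
  refine expect_indicator_eq_odds_mul (t := t) hpi.ne' _ _ ?_ ?_
  · rintro ω ⟨hA, hM, hP⟩
    have hπ : i ∉ busyEnd π ω t := busyEnd_eq_of_prefixAgree π hP ▸ hπh
    have hiN : i ∈ Nbr t := (Finset.mem_inter.mp (π.feasible _ _ _ _ hA)).2
    exact ⟨flag_eq_false_of_matchedBelow_greedy hiN hM,
      (act_flipFlag_of_not_mem_busyEnd π hπ).trans hA,
      act_greedy_flipFlag_of_matchedBelow hiN hM, prefixAgree_flipFlag hP⟩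
  · rintro ω ⟨hA, hAG, hP⟩
    have hG : i ∈ busyEnd (greedy N T Nbr) ω t := busyEnd_eq_of_prefixAgree _ hP ▸ hGh
    have hπ : i ∉ busyEnd π ω t := busyEnd_eq_of_prefixAgree π hP ▸ hπh
    exact ⟨(act_flipFlag_of_not_mem_busyEnd π hπ).trans hA,
      matchedBelow_greedy_flipFlag_of_act_eq hG hAG, prefixAgree_flipFlag hP⟩

/-- **The key conditional computation.**  Under the shared-Bernoulli coupling
of Greedy and any benchmark policy `π` (in particular the optimal clairvoyant
policy `OPT`) with geometric usage durations `F i = Geometric (pv i)`: for any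
resource `i` with `pv i > 0`, any time `t`, and any history `h ∈ 𝓗_t`, i.e.
any sample path `h` on which the event `F_{i,t-1}` occurs and `F*_{i,t-1}`
does not (resource `i` is unavailable under Greedy and available under `π` at
the end of time `t-1`),
`Pr(A*_t = i, A_t < i, H_{t-1} = h) = ((1 - p_i)/p_i) · Pr(A*_t = i, A_t = i, H_{t-1} = h)`. -/
theorem conditional_history_identity
    (N T : ℕ) (r : Fin N → ℝ) (hr0 : ∀ i, 0 ≤ r i) (hrmono : Monotone r)
    (Nbr : Fin T → Finset (Fin N))
    (pv : Fin N → ℝ) (hpv0 : ∀ i, 0 ≤ pv i) (hpv1 : ∀ i, pv i ≤ 1)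
    (π : Policy N T Nbr) (i : Fin N) (hpi : 0 < pv i) (t : Fin T)
    (h : Flags N T)
    (hhist : i ∈ busyEnd (greedy N T Nbr) h t.val ∧ i ∉ busyEnd π h t.val) :
    expect pv (fun ω =>
        if act π ω t = some i ∧ matchedBelow (greedy N T Nbr) ω t i ∧
            prefixAgree ω h t
        then 1 else 0)
      = ((1 - pv i) / pv i) *
        expect pv (fun ω =>
          if act π ω t = some i ∧ act (greedy N T Nbr) ω t = some i ∧
              prefixAgree ω h t
          then 1 else 0) :=
  conditional_history_identity_general N T Nbr pv π i hpi t h hhist
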